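/- Let φ be a conformal immersion on an open set U ⊆ ℝ² with conformal factor λ, with unit normal n := (φ_u × φ_v)/‖φ_u × φ_v‖, mean curvature H := ⟨Δφ, n⟩/(2λ²), and μ := (∂_z φ_z, n). Then the Gauss equation holds at every point of U: Δ(log λ) = 4|μ|²/λ² − λ² H², where Δ := ∂_uu + ∂_vv is the real Laplacian. -/

import Mathlib

/-!
Write `e = φ_u`, `f = φ_v`, and `L, M, N` for the normal components of `φ_uu, φ_uv, φ_vv`.
Differentiating the conformality relations `|e|² = |f|² = λ²`, `⟨e, f⟩ = 0` expresses every
tangential component of the second derivatives through `λ` and `∇λ`; expanding in the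
orthogonal frame `e, f, n` then computes `⟨φ_uu, φ_vv⟩` and `|φ_uv|²`. Since `φ_uuv = φ_uvu`,
also `⟨φ_uu, φ_vv⟩ - |φ_uv|² = ∂_v⟨φ_uu, φ_v⟩ - ∂_u⟨φ_uv, φ_v⟩`, and comparing the two gives
`LN - M² = |∇λ|² - λΔλ = -λ² Δ(log λ)`. Finally `μ = (L - N)/4 - iM/2` and
`H = (L + N)/(2λ²)`, so `4|μ|²/λ² - λ²H² = (M² - LN)/λ²`.
-/

open Complex

noncomputable section

/-- Euclidean 3-space. -/
abbrev E3 : Type := EuclideanSpace ℝ (Fin 3)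

/-- Partial derivative in the first (u) coordinate direction. -/
def pu {F : Type} [NormedAddCommGroup F] [NormedSpace ℝ F]
    (f : ℝ × ℝ → F) (p : ℝ × ℝ) : F := fderiv ℝ f p (1, 0)

/-- Partial derivative in the second (v) coordinate direction. -/
def pv {F : Type} [NormedAddCommGroup F] [NormedSpace ℝ F]
    (f : ℝ × ℝ → F) (p : ℝ × ℝ) : F := fderiv ℝ f p (0, 1)

/-- Cross product on ℝ³. -/
def cross (a b : E3) : E3 :=
  (WithLp.equiv 2 (Fin 3 → ℝ)).symm
    ![a 1 * b 2 - a 2 * b 1, a 2 * b 0 - a 0 * b 2, a 0 * b 1 - a 1 * b 0]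

/-- The Euclidean inner product on ℝ³. -/
def ip (a b : E3) : ℝ := @inner ℝ _ _ a b

/-- `φ` is a smooth conformal immersion on the open set `U ⊆ ℝ²` with
(smooth, positive) conformal factor `lam`:  ⟨φ_u,φ_u⟩ = λ², ⟨φ_v,φ_v⟩ = λ²,
⟨φ_u,φ_v⟩ = 0 at every point of `U`. -/
def IsConfImm (U : Set (ℝ × ℝ)) (φ : ℝ × ℝ → E3) (lam : ℝ × ℝ → ℝ) : Prop :=
  IsOpen U ∧ ContDiffOn ℝ (⊤ : ℕ∞) φ U ∧ ContDiffOn ℝ (⊤ : ℕ∞) lam U ∧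
    ∀ p ∈ U, 0 < lam p ∧
      ip (pu φ p) (pu φ p) = (lam p) ^ 2 ∧
      ip (pv φ p) (pv φ p) = (lam p) ^ 2 ∧
      ip (pu φ p) (pv φ p) = 0

/-- Complexification ℝ³ ↪ ℂ³. -/
def toC (x : E3) : Fin 3 → ℂ := fun j => (x j : ℂ)

/-- Complex-bilinear dot product on ℂ³:  (a,b) = Σⱼ aⱼ bⱼ. -/
def cdot (a b : Fin 3 → ℂ) : ℂ := ∑ j, a j * b j

/-- ∂_z = ½(∂_u − i ∂_v) for maps into complex normed spaces. -/
def dz {F : Type} [NormedAddCommGroup F] [NormedSpace ℂ F]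
    (f : ℝ × ℝ → F) (p : ℝ × ℝ) : F :=
  (2 : ℂ)⁻¹ • (pu f p - Complex.I • pv f p)

/-- ∂_z̄ = ½(∂_u + i ∂_v) for maps into complex normed spaces. -/
def dzbar {F : Type} [NormedAddCommGroup F] [NormedSpace ℂ F]
    (f : ℝ × ℝ → F) (p : ℝ × ℝ) : F :=
  (2 : ℂ)⁻¹ • (pu f p + Complex.I • pv f p)

/-- `f_z := ½(f_u − i f_v) ∈ ℂ³` for a real-vector-valued map `f` (in particular `φ_z`). -/
def phiz (f : ℝ × ℝ → E3) (p : ℝ × ℝ) : Fin 3 → ℂ :=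
  (2 : ℂ)⁻¹ • (toC (pu f p) - Complex.I • toC (pv f p))

/-- `f_z̄ := ½(f_u + i f_v) ∈ ℂ³` for a real-vector-valued map `f` (in particular `φ_z̄`). -/
def phizbar (f : ℝ × ℝ → E3) (p : ℝ × ℝ) : Fin 3 → ℂ :=
  (2 : ℂ)⁻¹ • (toC (pu f p) + Complex.I • toC (pv f p))

/-- The unit normal n = (φ_u × φ_v)/‖φ_u × φ_v‖. -/
def nvec (φ : ℝ × ℝ → E3) (p : ℝ × ℝ) : E3 :=
  ‖cross (pu φ p) (pv φ p)‖⁻¹ • cross (pu φ p) (pv φ p)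

/-- Componentwise Laplacian Δ = ∂_uu + ∂_vv. -/
def lap {F : Type} [NormedAddCommGroup F] [NormedSpace ℝ F]
    (f : ℝ × ℝ → F) (p : ℝ × ℝ) : F := pu (pu f) p + pv (pv f) p

/-- Mean curvature H = ⟨Δφ, n⟩/(2λ²). -/
def mcurv (φ : ℝ × ℝ → E3) (lam : ℝ × ℝ → ℝ) (p : ℝ × ℝ) : ℝ :=
  ip (lap φ p) (nvec φ p) / (2 * (lam p) ^ 2)

/-- μ := (∂_z φ_z, n). -/
def muQ (φ : ℝ × ℝ → E3) (p : ℝ × ℝ) : ℂ :=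
  cdot (dz (phiz φ) p) (toC (nvec φ p))

open Set

section PartialDerivatives

variable {F : Type} [NormedAddCommGroup F] [NormedSpace ℝ F]
  {U : Set (ℝ × ℝ)} {f g : ℝ × ℝ → F} {p : ℝ × ℝ}

theorem pu_congr_of_eqOn (hU : IsOpen U) (hfg : EqOn f g U) (hp : p ∈ U) : pu f p = pu g p := by
  rw [pu, pu, (hfg.eventuallyEq_of_mem (hU.mem_nhds hp)).fderiv_eq]

theorem pv_congr_of_eqOn (hU : IsOpen U) (hfg : EqOn f g U) (hp : p ∈ U) : pv f p = pv g p := by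
  rw [pv, pv, (hfg.eventuallyEq_of_mem (hU.mem_nhds hp)).fderiv_eq]

theorem ContDiffAt.pu {m n : WithTop ℕ∞} (hf : ContDiffAt ℝ n f p) (hmn : m + 1 ≤ n) :
    ContDiffAt ℝ m (pu f) p :=
  (hf.fderiv_right hmn).clm_apply contDiffAt_const

theorem ContDiffAt.pv {m n : WithTop ℕ∞} (hf : ContDiffAt ℝ n f p) (hmn : m + 1 ≤ n) :
    ContDiffAt ℝ m (pv f) p :=
  (hf.fderiv_right hmn).clm_apply contDiffAt_const

theorem pu_pv_comm {n : WithTop ℕ∞} (hf : ContDiffAt ℝ n f p) (hn : 2 ≤ n) :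
    pu (pv f) p = pv (pu f) p := by
  have hf' : DifferentiableAt ℝ (fderiv ℝ f) p :=
    (hf.fderiv_right (m := 1) (by simpa [one_add_one_eq_two] using hn)).differentiableAt
      one_ne_zero
  have hdir (w v : ℝ × ℝ) :
      fderiv ℝ (fun q => fderiv ℝ f q w) p v = fderiv ℝ (fderiv ℝ f) p v w := by
    simp [fderiv_clm_apply hf' (differentiableAt_const w)]
  exact (hdir (0, 1) (1, 0)).trans
    ((hf.isSymmSndFDerivAt (by simpa using hn) (1, 0) (0, 1)).trans (hdir (1, 0) (0, 1)).symm)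

theorem pu_sub (hf : DifferentiableAt ℝ f p) (hg : DifferentiableAt ℝ g p) :
    pu (fun q => f q - g q) p = pu f p - pu g p := by
  rw [pu, fderiv_fun_sub hf hg]; rfl

theorem pv_sub (hf : DifferentiableAt ℝ f p) (hg : DifferentiableAt ℝ g p) :
    pv (fun q => f q - g q) p = pv f p - pv g p := by
  rw [pv, fderiv_fun_sub hf hg]; rfl

theorem pv_neg : pv (fun q => -f q) p = -pv f p := by
  rw [pv, fderiv_fun_neg]; rfl

theorem pu_clm_apply {G : Type} [NormedAddCommGroup G] [NormedSpace ℝ G] (T : F →L[ℝ] G)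
    (hf : DifferentiableAt ℝ f p) : pu (fun q => T (f q)) p = T (pu f p) := by
  have hT : HasFDerivAt (fun q => T (f q)) (T.comp (fderiv ℝ f p)) p :=
    T.hasFDerivAt.comp p hf.hasFDerivAt
  rw [pu, hT.fderiv]; rfl

theorem pv_clm_apply {G : Type} [NormedAddCommGroup G] [NormedSpace ℝ G] (T : F →L[ℝ] G)
    (hf : DifferentiableAt ℝ f p) : pv (fun q => T (f q)) p = T (pv f p) := by
  have hT : HasFDerivAt (fun q => T (f q)) (T.comp (fderiv ℝ f p)) p :=
    T.hasFDerivAt.comp p hf.hasFDerivAt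
  rw [pv, hT.fderiv]; rfl

section ComplexValued

variable {G : Type} [NormedAddCommGroup G] [NormedSpace ℂ G] {f : ℝ × ℝ → G}

theorem pu_const_smul (c : ℂ) (hf : DifferentiableAt ℝ f p) :
    pu (fun q => c • f q) p = c • pu f p := by
  rw [pu, fderiv_fun_const_smul hf c]; rfl

theorem pv_const_smul (c : ℂ) (hf : DifferentiableAt ℝ f p) :
    pv (fun q => c • f q) p = c • pv f p := by
  rw [pv, fderiv_fun_const_smul hf c]; rfl

end ComplexValued

section Inner

variable {E : Type} [NormedAddCommGroup E] [InnerProductSpace ℝ E] {X Y : ℝ × ℝ → E}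

theorem pu_inner (hX : DifferentiableAt ℝ X p) (hY : DifferentiableAt ℝ Y p) :
    pu (fun q => inner ℝ (X q) (Y q)) p = inner ℝ (pu X p) (Y p) + inner ℝ (X p) (pu Y p) := by
  rw [pu, fderiv_inner_apply (𝕜 := ℝ) hX hY, add_comm]; rfl

theorem pv_inner (hX : DifferentiableAt ℝ X p) (hY : DifferentiableAt ℝ Y p) :
    pv (fun q => inner ℝ (X q) (Y q)) p = inner ℝ (pv X p) (Y p) + inner ℝ (X p) (pv Y p) := by
  rw [pv, fderiv_inner_apply (𝕜 := ℝ) hX hY, add_comm]; rfl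

end Inner

section RealValued

variable {a b : ℝ × ℝ → ℝ}

theorem pu_mul (ha : DifferentiableAt ℝ a p) (hb : DifferentiableAt ℝ b p) :
    pu (fun q => a q * b q) p = pu a p * b p + a p * pu b p := by
  simp only [pu, fderiv_fun_mul ha hb, add_apply, smul_apply, smul_eq_mul]
  ring

theorem pv_mul (ha : DifferentiableAt ℝ a p) (hb : DifferentiableAt ℝ b p) :
    pv (fun q => a q * b q) p = pv a p * b p + a p * pv b p := by
  simp only [pv, fderiv_fun_mul ha hb, add_apply, smul_apply, smul_eq_mul]
  ring

theorem pu_log (ha : DifferentiableAt ℝ a p) (hap : a p ≠ 0) :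
    pu (fun q => Real.log (a q)) p = pu a p / a p := by
  rw [pu, fderiv.log ha hap]; simp [pu, div_eq_inv_mul]

theorem pv_log (ha : DifferentiableAt ℝ a p) (hap : a p ≠ 0) :
    pv (fun q => Real.log (a q)) p = pv a p / a p := by
  rw [pv, fderiv.log ha hap]; simp [pv, div_eq_inv_mul]

end RealValued

end PartialDerivatives

section GramDerivatives

variable {E : Type} [NormedAddCommGroup E] [InnerProductSpace ℝ E] {U : Set (ℝ × ℝ)}
  {X Y : ℝ × ℝ → E} {a : ℝ × ℝ → ℝ} {p : ℝ × ℝ}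

theorem inner_pu_self_of_eqOn (hU : IsOpen U) (hp : p ∈ U) (hX : DifferentiableAt ℝ X p)
    (ha : DifferentiableAt ℝ a p)
    (hXa : EqOn (fun q => inner ℝ (X q) (X q)) (fun q => a q ^ 2) U) :
    inner ℝ (pu X p) (X p) = a p * pu a p := by
  have h := pu_congr_of_eqOn hU hXa hp
  simp only [sq] at h
  rw [pu_inner hX hX, pu_mul ha ha, real_inner_comm (pu X p) (X p)] at h
  linarith

theorem inner_pv_self_of_eqOn (hU : IsOpen U) (hp : p ∈ U) (hX : DifferentiableAt ℝ X p)
    (ha : DifferentiableAt ℝ a p)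
    (hXa : EqOn (fun q => inner ℝ (X q) (X q)) (fun q => a q ^ 2) U) :
    inner ℝ (pv X p) (X p) = a p * pv a p := by
  have h := pv_congr_of_eqOn hU hXa hp
  simp only [sq] at h
  rw [pv_inner hX hX, pv_mul ha ha, real_inner_comm (pv X p) (X p)] at h
  linarith

theorem inner_pu_eq_neg_of_eqOn_zero (hU : IsOpen U) (hp : p ∈ U) (hX : DifferentiableAt ℝ X p)
    (hY : DifferentiableAt ℝ Y p) (hXY : EqOn (fun q => inner ℝ (X q) (Y q)) 0 U) :
    inner ℝ (pu X p) (Y p) = -inner ℝ (X p) (pu Y p) := by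
  have h := pu_congr_of_eqOn hU hXY hp
  rw [pu_inner hX hY] at h
  exact eq_neg_of_add_eq_zero_left (h.trans (by simp [pu]))

theorem inner_pv_eq_neg_of_eqOn_zero (hU : IsOpen U) (hp : p ∈ U) (hX : DifferentiableAt ℝ X p)
    (hY : DifferentiableAt ℝ Y p) (hXY : EqOn (fun q => inner ℝ (X q) (Y q)) 0 U) :
    inner ℝ (pv X p) (Y p) = -inner ℝ (X p) (pv Y p) := by
  have h := pv_congr_of_eqOn hU hXY hp
  rw [pv_inner hX hY] at h
  exact eq_neg_of_add_eq_zero_left (h.trans (by simp [pv]))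

end GramDerivatives

section LogLaplacian

variable {U : Set (ℝ × ℝ)} {a : ℝ × ℝ → ℝ} {p : ℝ × ℝ}

theorem pu_pu_log (hU : IsOpen U) (ha : ContDiffOn ℝ 2 a U) (ha0 : ∀ q ∈ U, a q ≠ 0)
    (hp : p ∈ U) :
    pu (pu fun q => Real.log (a q)) p = (a p * pu (pu a) p - pu a p ^ 2) / a p ^ 2 := by
  have hda : ∀ q ∈ U, DifferentiableAt ℝ a q := fun q hq =>
    (ha.contDiffAt (hU.mem_nhds hq)).differentiableAt two_ne_zero
  have hlog : DifferentiableAt ℝ (pu fun q => Real.log (a q)) p :=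
    ((ha.log ha0).contDiffAt (hU.mem_nhds hp) |>.pu (m := 1) le_rfl).differentiableAt
      one_ne_zero
  have hmul : EqOn (fun q => a q * pu (fun r => Real.log (a r)) q) (pu a) U := fun q hq => by
    simp only [pu_log (hda q hq) (ha0 q hq)]
    field_simp [ha0 q hq]
  have h := pu_congr_of_eqOn hU hmul hp
  rw [pu_mul (hda p hp) hlog, pu_log (hda p hp) (ha0 p hp)] at h
  field_simp [ha0 p hp] at h ⊢
  linear_combination h

theorem pv_pv_log (hU : IsOpen U) (ha : ContDiffOn ℝ 2 a U) (ha0 : ∀ q ∈ U, a q ≠ 0)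
    (hp : p ∈ U) :
    pv (pv fun q => Real.log (a q)) p = (a p * pv (pv a) p - pv a p ^ 2) / a p ^ 2 := by
  have hda : ∀ q ∈ U, DifferentiableAt ℝ a q := fun q hq =>
    (ha.contDiffAt (hU.mem_nhds hq)).differentiableAt two_ne_zero
  have hlog : DifferentiableAt ℝ (pv fun q => Real.log (a q)) p :=
    ((ha.log ha0).contDiffAt (hU.mem_nhds hp) |>.pv (m := 1) le_rfl).differentiableAt
      one_ne_zero
  have hmul : EqOn (fun q => a q * pv (fun r => Real.log (a r)) q) (pv a) U := fun q hq => by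
    simp only [pv_log (hda q hq) (ha0 q hq)]
    field_simp [ha0 q hq]
  have h := pv_congr_of_eqOn hU hmul hp
  rw [pv_mul (hda p hp) hlog, pv_log (hda p hp) (ha0 p hp)] at h
  field_simp [ha0 p hp] at h ⊢
  linear_combination h

theorem lap_log (hU : IsOpen U) (ha : ContDiffOn ℝ 2 a U) (ha0 : ∀ q ∈ U, a q ≠ 0)
    (hp : p ∈ U) :
    lap (fun q => Real.log (a q)) p = (a p * lap a p - pu a p ^ 2 - pv a p ^ 2) / a p ^ 2 := by
  rw [lap, lap, pu_pu_log hU ha ha0 hp, pv_pv_log hU ha ha0 hp]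
  ring

end LogLaplacian

section CrossProduct

theorem ip_eq_sum (a b : E3) : ip a b = a 0 * b 0 + a 1 * b 1 + a 2 * b 2 := by
  simp [ip, PiLp.inner_apply, Fin.sum_univ_three, mul_comm]

@[simp] theorem cross_apply_zero (a b : E3) : cross a b 0 = a 1 * b 2 - a 2 * b 1 := by
  simp [cross]

@[simp] theorem cross_apply_one (a b : E3) : cross a b 1 = a 2 * b 0 - a 0 * b 2 := by
  simp [cross]

@[simp] theorem cross_apply_two (a b : E3) : cross a b 2 = a 0 * b 1 - a 1 * b 0 := by
  simp [cross]

theorem ip_cross_self (a b : E3) :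
    ip (cross a b) (cross a b) = ip a a * ip b b - ip a b ^ 2 := by
  simp only [ip_eq_sum, cross_apply_zero, cross_apply_one, cross_apply_two]; ring

theorem ip_cross_mul_ip_cross (a b x y : E3) :
    ip x (cross a b) * ip y (cross a b)
      = ip x y * (ip a a * ip b b - ip a b ^ 2)
        - ip b b * (ip x a * ip y a) - ip a a * (ip x b * ip y b)
        + ip a b * (ip x a * ip y b + ip x b * ip y a) := by
  simp only [ip_eq_sum, cross_apply_zero, cross_apply_one, cross_apply_two]; ring

variable {e f : E3} {l : ℝ}

theorem norm_cross_of_conformal (hee : ip e e = l ^ 2) (hff : ip f f = l ^ 2) (hef : ip e f = 0) :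
    ‖cross e f‖ = l ^ 2 := by
  rw [norm_eq_sqrt_real_inner, ← ip, ip_cross_self, hee, hff, hef, ← sq, zero_pow two_ne_zero,
    sub_zero, Real.sqrt_sq (sq_nonneg l)]

theorem ip_eq_frame_expansion {n : E3} (hl : l ≠ 0) (hee : ip e e = l ^ 2) (hff : ip f f = l ^ 2)
    (hef : ip e f = 0) (hn : n = ‖cross e f‖⁻¹ • cross e f) (x y : E3) :
    ip x y = (ip x e * ip y e + ip x f * ip y f) / l ^ 2 + ip x n * ip y n := by
  have hxy := ip_cross_mul_ip_cross e f x y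
  rw [hee, hff, hef] at hxy
  simp only [hn, ip, inner_smul_right] at hxy ⊢
  rw [norm_cross_of_conformal hee hff hef]
  field_simp
  linear_combination -hxy

end CrossProduct

section Complexification

def toCLM : E3 →L[ℝ] (Fin 3 → ℂ) :=
  ContinuousLinearMap.pi fun j => ofRealCLM.comp (EuclideanSpace.proj j)

theorem cdot_toC (x y : E3) : cdot (toC x) (toC y) = ip x y := by
  simp [cdot, toC, Fin.sum_univ_three, ip_eq_sum]

theorem cdot_smul_left (c : ℂ) (a b : Fin 3 → ℂ) : cdot (c • a) b = c * cdot a b := by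
  simp only [cdot, Pi.smul_apply, smul_eq_mul, Finset.mul_sum, mul_assoc]

theorem cdot_sub_left (a b c : Fin 3 → ℂ) : cdot (a - b) c = cdot a c - cdot b c := by
  simp only [cdot, Pi.sub_apply, sub_mul, Finset.sum_sub_distrib]

theorem cdot_phiz_toC (f : ℝ × ℝ → E3) (p : ℝ × ℝ) (n : E3) :
    cdot (phiz f p) (toC n) = 2⁻¹ * (ip (pu f p) n - I * ip (pv f p) n) := by
  rw [← cdot_toC, ← cdot_toC]
  simp only [phiz, cdot, Finset.mul_sum, ← Finset.sum_sub_distrib]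
  refine Finset.sum_congr rfl fun j _ => ?_
  simp only [Pi.smul_apply, Pi.sub_apply, smul_eq_mul]
  ring

variable {f : ℝ × ℝ → E3} {p : ℝ × ℝ}

theorem pu_phiz (hf : ContDiffAt ℝ 2 f p) : pu (phiz f) p = phiz (pu f) p := by
  have hu : DifferentiableAt ℝ (pu f) p := (hf.pu (m := 1) le_rfl).differentiableAt one_ne_zero
  have hv : DifferentiableAt ℝ (pv f) p := (hf.pv (m := 1) le_rfl).differentiableAt one_ne_zero
  have hu' : DifferentiableAt ℝ (fun q => toCLM (pu f q)) p := toCLM.differentiableAt.comp p hu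
  have hv' : DifferentiableAt ℝ (fun q => toCLM (pv f q)) p := toCLM.differentiableAt.comp p hv
  change pu (fun q => (2 : ℂ)⁻¹ • (toCLM (pu f q) - I • toCLM (pv f q))) p = _
  rw [pu_const_smul _ (hu'.fun_sub (hv'.fun_const_smul I)), pu_sub hu' (hv'.fun_const_smul I),
    pu_const_smul _ hv', pu_clm_apply _ hu, pu_clm_apply _ hv, pu_pv_comm hf le_rfl]
  rfl

theorem pv_phiz (hf : ContDiffAt ℝ 2 f p) : pv (phiz f) p = phiz (pv f) p := by
  have hu : DifferentiableAt ℝ (pu f) p := (hf.pu (m := 1) le_rfl).differentiableAt one_ne_zero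
  have hv : DifferentiableAt ℝ (pv f) p := (hf.pv (m := 1) le_rfl).differentiableAt one_ne_zero
  have hu' : DifferentiableAt ℝ (fun q => toCLM (pu f q)) p := toCLM.differentiableAt.comp p hu
  have hv' : DifferentiableAt ℝ (fun q => toCLM (pv f q)) p := toCLM.differentiableAt.comp p hv
  change pv (fun q => (2 : ℂ)⁻¹ • (toCLM (pu f q) - I • toCLM (pv f q))) p = _
  rw [pv_const_smul _ (hu'.fun_sub (hv'.fun_const_smul I)), pv_sub hu' (hv'.fun_const_smul I),
    pv_const_smul _ hv', pv_clm_apply _ hu, pv_clm_apply _ hv, ← pu_pv_comm hf le_rfl]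
  rfl

theorem muQ_eq (hf : ContDiffAt ℝ 2 f p) :
    muQ f p = ((ip (pu (pu f) p) (nvec f p) - ip (pv (pv f) p) (nvec f p)) / 4 : ℝ)
      + (-(ip (pu (pv f) p) (nvec f p) / 2) : ℝ) * I := by
  have hdz : dz (phiz f) p = (2 : ℂ)⁻¹ • (phiz (pu f) p - I • phiz (pv f) p) := by
    rw [dz, pu_phiz hf, pv_phiz hf]
  rw [muQ, hdz, cdot_smul_left, cdot_sub_left, cdot_smul_left, cdot_phiz_toC, cdot_phiz_toC,
    ← pu_pv_comm hf le_rfl]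
  push_cast
  linear_combination (ip (pv (pv f) p) (nvec f p) / 4 : ℂ) * I_sq

end Complexification

namespace IsConfImm

variable {U : Set (ℝ × ℝ)} {φ : ℝ × ℝ → E3} {lam : ℝ × ℝ → ℝ} {p : ℝ × ℝ}

theorem contDiffAt (h : IsConfImm U φ lam) (hp : p ∈ U) : ContDiffAt ℝ 3 φ p :=
  (h.2.1.contDiffAt (h.1.mem_nhds hp)).of_le (WithTop.coe_le_coe.mpr le_top)

theorem contDiffOn_factor (h : IsConfImm U φ lam) : ContDiffOn ℝ 2 lam U :=
  h.2.2.1.of_le (WithTop.coe_le_coe.mpr le_top)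

theorem contDiffAt_factor (h : IsConfImm U φ lam) (hp : p ∈ U) : ContDiffAt ℝ 2 lam p :=
  h.contDiffOn_factor.contDiffAt (h.1.mem_nhds hp)

theorem differentiableAt_factor (h : IsConfImm U φ lam) (hp : p ∈ U) :
    DifferentiableAt ℝ lam p :=
  (h.contDiffAt_factor hp).differentiableAt two_ne_zero

theorem differentiableAt_pu (h : IsConfImm U φ lam) (hp : p ∈ U) :
    DifferentiableAt ℝ (pu φ) p :=
  ((h.contDiffAt hp).pu (m := 2) le_rfl).differentiableAt two_ne_zero

theorem differentiableAt_pv (h : IsConfImm U φ lam) (hp : p ∈ U) :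
    DifferentiableAt ℝ (pv φ) p :=
  ((h.contDiffAt hp).pv (m := 2) le_rfl).differentiableAt two_ne_zero

theorem inner_uu_u (h : IsConfImm U φ lam) (hp : p ∈ U) :
    ip (pu (pu φ) p) (pu φ p) = lam p * pu lam p :=
  inner_pu_self_of_eqOn h.1 hp (h.differentiableAt_pu hp) (h.differentiableAt_factor hp)
    fun _ hq => (h.2.2.2 _ hq).2.1

theorem inner_uv_u (h : IsConfImm U φ lam) (hp : p ∈ U) :
    ip (pu (pv φ) p) (pu φ p) = lam p * pv lam p := by
  rw [pu_pv_comm (h.contDiffAt hp) (by norm_num)]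
  exact inner_pv_self_of_eqOn h.1 hp (h.differentiableAt_pu hp) (h.differentiableAt_factor hp)
    fun _ hq => (h.2.2.2 _ hq).2.1

theorem inner_uv_v (h : IsConfImm U φ lam) (hp : p ∈ U) :
    ip (pu (pv φ) p) (pv φ p) = lam p * pu lam p :=
  inner_pu_self_of_eqOn h.1 hp (h.differentiableAt_pv hp) (h.differentiableAt_factor hp)
    fun _ hq => (h.2.2.2 _ hq).2.2.1

theorem inner_vv_v (h : IsConfImm U φ lam) (hp : p ∈ U) :
    ip (pv (pv φ) p) (pv φ p) = lam p * pv lam p :=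
  inner_pv_self_of_eqOn h.1 hp (h.differentiableAt_pv hp) (h.differentiableAt_factor hp)
    fun _ hq => (h.2.2.2 _ hq).2.2.1

theorem inner_uu_v (h : IsConfImm U φ lam) (hp : p ∈ U) :
    ip (pu (pu φ) p) (pv φ p) = -(lam p * pv lam p) := by
  rw [ip, inner_pu_eq_neg_of_eqOn_zero h.1 hp (h.differentiableAt_pu hp)
    (h.differentiableAt_pv hp) fun _ hq => (h.2.2.2 _ hq).2.2.2, real_inner_comm]
  exact congrArg Neg.neg (h.inner_uv_u hp)

theorem inner_vv_u (h : IsConfImm U φ lam) (hp : p ∈ U) :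
    ip (pv (pv φ) p) (pu φ p) = -(lam p * pu lam p) := by
  have hB := inner_pv_eq_neg_of_eqOn_zero h.1 hp (h.differentiableAt_pu hp)
    (h.differentiableAt_pv hp) fun _ hq => (h.2.2.2 _ hq).2.2.2
  have hC := h.inner_uv_v hp
  rw [← pu_pv_comm (h.contDiffAt hp) (by norm_num)] at hB
  rw [ip] at hC ⊢
  rw [real_inner_comm]
  linarith

theorem inner_uu_vv_sub_inner_uv_uv (h : IsConfImm U φ lam) (hp : p ∈ U) :
    ip (pu (pu φ) p) (pv (pv φ) p) - ip (pu (pv φ) p) (pu (pv φ) p)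
      = -(lam p * lap lam p + pu lam p ^ 2 + pv lam p ^ 2) := by
  have hφ := h.contDiffAt hp
  have hl := h.differentiableAt_factor hp
  have hlu : DifferentiableAt ℝ (pu lam) p :=
    ((h.contDiffAt_factor hp).pu (m := 1) le_rfl).differentiableAt one_ne_zero
  have hlv : DifferentiableAt ℝ (pv lam) p :=
    ((h.contDiffAt_factor hp).pv (m := 1) le_rfl).differentiableAt one_ne_zero
  have huu : DifferentiableAt ℝ (pu (pu φ)) p :=
    ((hφ.pu (m := 2) le_rfl).pu (m := 1) le_rfl).differentiableAt one_ne_zero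
  have huv : DifferentiableAt ℝ (pu (pv φ)) p :=
    ((hφ.pv (m := 2) le_rfl).pu (m := 1) le_rfl).differentiableAt one_ne_zero
  have hthird : pv (pu (pu φ)) p = pu (pu (pv φ)) p := by
    rw [← pu_pv_comm (hφ.pu (m := 2) le_rfl) (by norm_num)]
    exact pu_congr_of_eqOn h.1
      (fun q hq => (pu_pv_comm (h.contDiffAt hq) (by norm_num)).symm) hp
  have hv := pv_congr_of_eqOn h.1 (fun q hq => h.inner_uu_v hq) hp
  have hu := pu_congr_of_eqOn h.1 (fun q hq => h.inner_uv_v hq) hp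
  simp only [ip] at hv hu
  rw [pv_inner huu (h.differentiableAt_pv hp), pv_neg, pv_mul hl hlv, hthird] at hv
  rw [pu_inner huv (h.differentiableAt_pv hp), pu_mul hl hlu] at hu
  rw [ip, ip, lap]
  linarith

theorem det_second_fundamental_form (h : IsConfImm U φ lam) (hp : p ∈ U) :
    ip (pu (pu φ) p) (nvec φ p) * ip (pv (pv φ) p) (nvec φ p)
        - ip (pu (pv φ) p) (nvec φ p) ^ 2
      = pu lam p ^ 2 + pv lam p ^ 2 - lam p * lap lam p := by
  obtain ⟨hl, hee, hff, hef⟩ := h.2.2.2 p hp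
  have frame := ip_eq_frame_expansion (n := nvec φ p) hl.ne' hee hff hef rfl
  have hAB := frame (pu (pu φ) p) (pv (pv φ) p)
  have hCC := frame (pu (pv φ) p) (pu (pv φ) p)
  rw [h.inner_uu_u hp, h.inner_uu_v hp, h.inner_vv_u hp, h.inner_vv_v hp] at hAB
  rw [h.inner_uv_u hp, h.inner_uv_v hp] at hCC
  field_simp at hAB hCC
  linear_combination hCC - hAB + h.inner_uu_vv_sub_inner_uv_uv hp

end IsConfImm

theorem mcurv_eq (φ : ℝ × ℝ → E3) (lam : ℝ × ℝ → ℝ) (p : ℝ × ℝ) :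
    mcurv φ lam p
      = (ip (pu (pu φ) p) (nvec φ p) + ip (pv (pv φ) p) (nvec φ p)) / (2 * lam p ^ 2) := by
  rw [mcurv, lap, ip, inner_add_left]
  rfl

/-- Gauss equation: Δ(log λ) = 4|μ|²/λ² − λ² H². -/
theorem conformal_gauss_equation
    (U : Set (ℝ × ℝ)) (φ : ℝ × ℝ → E3) (lam : ℝ × ℝ → ℝ)
    (h : IsConfImm U φ lam) :
    ∀ p ∈ U,
      lap (fun q => Real.log (lam q)) p
        = 4 * ‖muQ φ p‖ ^ 2 / (lam p) ^ 2
          - (lam p) ^ 2 * (mcurv φ lam p) ^ 2 := by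
  intro p hp
  have hl : lam p ≠ 0 := (h.2.2.2 p hp).1.ne'
  rw [lap_log h.1 h.contDiffOn_factor (fun q hq => (h.2.2.2 q hq).1.ne') hp, Complex.sq_norm,
    muQ_eq ((h.contDiffAt hp).of_le (by norm_num)), Complex.normSq_add_mul_I, mcurv_eq]
  field_simp
  linear_combination 16 * h.det_second_fundamental_form hp
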